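/- arXiv:1910.09654 — 2 statements merged into one kernel-verified Lean document; each statement's English description precedes it below -/
import Mathlib

section
/- Let G be a smooth 2-form and J a smooth 3-form on ℝ⁴. For μ ∈ {0,1,2,3} and t ∈ ℝ, let i⁽μ⁾_t : ℝ³ → ℝ⁴ be the affine immersion i⁽μ⁾_t(a₁,a₂,a₃) = t Γ⁽μ⁾ + a₁ X⁽μ⁾₁ + a₂ X⁽μ⁾₂ + a₃ X⁽μ⁾₃, let D⁽μ⁾_t be the pullback of G along i⁽μ⁾_t and ρ⁽μ⁾_t the pullback of J along i⁽μ⁾_t (pullback of a p-form ω along i⁽μ⁾_t means the p-form a ↦ ω(i⁽μ⁾_t(a)) ∘ (L⁽μ⁾)ᵖ where L⁽μ⁾ : ℝ³ → ℝ⁴ sends the k-th standard basis vector to X⁽μ⁾ₖ). Then the Gauss-law constraint d(D⁽μ⁾_t) = ρ⁽μ⁾_t holds on ℝ³ for every t ∈ ℝ and every μ ∈ {0,1,2,3} if and only if dG = J holds identically on ℝ⁴. -/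
noncomputable section

/-- ℝ⁴, the Minkowski spacetime manifold. -/
abbrev V4 : Type := Fin 4 → ℝ

/-- The standard basis e₀, e₁, e₂, e₃ of ℝ⁴. -/
def e (i : Fin 4) : V4 := Pi.single i 1

/-- Contravariant part Γ⁽μ⁾ of the frame μ: Γ⁽⁰⁾ = e₀ and, for j ∈ {1,2,3},
Γ⁽ʲ⁾ = γ e₀ + βγ e_j (boost along e_j). -/
def Γfr (β γ : ℝ) (μ : Fin 4) : V4 :=
  if μ = 0 then e 0 else γ • e 0 + (β * γ) • e μ

/-- Spatial vectors X⁽μ⁾ₖ (k = 1,2,3, indexed by `k : Fin 3` ↦ spatial index `k+1`):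
for the fiducial frame X⁽⁰⁾ₖ = eₖ; for the frame boosted along e_j,
X⁽ʲ⁾ⱼ = βγ e₀ + γ e_j and X⁽ʲ⁾ₖ = eₖ for k ≠ j. -/
def Xfr (β γ : ℝ) (μ : Fin 4) (k : Fin 3) : V4 :=
  if k.succ = μ then (β * γ) • e 0 + γ • e μ else e k.succ

/-- Exterior derivative of a smooth p-form ω (given by its values
ω x (v₁, …, v_p) as a function): (dω)(x)(v₀, …, v_p)
= Σᵢ (−1)ⁱ (Dω(x) vᵢ)(v₀, …, v̂ᵢ, …, v_p), where Dω(x) is the Fréchet derivative. -/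
def extD {E : Type*} [NormedAddCommGroup E] [NormedSpace ℝ E] {p : ℕ}
    (η : E → (Fin p → E) → ℝ) (x : E) (v : Fin (p + 1) → E) : ℝ :=
  ∑ i : Fin (p + 1),
    (-1 : ℝ) ^ (i : ℕ) * fderiv ℝ (fun y => η y (fun j => v (i.succAbove j))) x (v i)

/-- The linear map L⁽μ⁾ : ℝ³ → ℝ⁴ sending the k-th standard basis vector to X⁽μ⁾ₖ. -/
def Lfun (β γ : ℝ) (μ : Fin 4) (u : Fin 3 → ℝ) : V4 := ∑ k : Fin 3, u k • Xfr β γ μ k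

/-- The affine immersion i⁽μ⁾_t : ℝ³ → ℝ⁴ of the simultaneity leaf of frame μ at time t:
i⁽μ⁾_t(a₁,a₂,a₃) = t Γ⁽μ⁾ + a₁ X⁽μ⁾₁ + a₂ X⁽μ⁾₂ + a₃ X⁽μ⁾₃. -/
def imm (β γ : ℝ) (μ : Fin 4) (t : ℝ) (a : Fin 3 → ℝ) : V4 :=
  t • Γfr β γ μ + ∑ k : Fin 3, a k • Xfr β γ μ k

/-- Pullback of a 2-form F on ℝ⁴ along i⁽μ⁾_t: the 2-form on ℝ³ given by
(a, (u,v)) ↦ F(i⁽μ⁾_t(a))(L⁽μ⁾u, L⁽μ⁾v). -/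
def pb2 (F : V4 → AlternatingMap ℝ V4 ℝ (Fin 2)) (β γ : ℝ) (μ : Fin 4) (t : ℝ) :
    (Fin 3 → ℝ) → (Fin 2 → (Fin 3 → ℝ)) → ℝ :=
  fun a v => F (imm β γ μ t a) (fun i => Lfun β γ μ (v i))

/-- Pullback of a 3-form J on ℝ⁴ along i⁽μ⁾_t. -/
def pb3 (J : V4 → AlternatingMap ℝ V4 ℝ (Fin 3)) (β γ : ℝ) (μ : Fin 4) (t : ℝ) :
    (Fin 3 → ℝ) → (Fin 3 → (Fin 3 → ℝ)) → ℝ :=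
  fun a v => J (imm β γ μ t a) (fun i => Lfun β γ μ (v i))

-- auxiliary development, stage 1
section Aux

/-- L as a continuous linear map. -/
def Lclm (β γ : ℝ) (μ : Fin 4) : (Fin 3 → ℝ) →L[ℝ] V4 :=
  ∑ k : Fin 3, (ContinuousLinearMap.proj k : (Fin 3 → ℝ) →L[ℝ] ℝ).smulRight (Xfr β γ μ k)

lemma Lclm_apply (β γ : ℝ) (μ : Fin 4) (u : Fin 3 → ℝ) : Lclm β γ μ u = Lfun β γ μ u := by
  simp [Lclm, Lfun, ContinuousLinearMap.sum_apply]

lemma fderiv_comp_imm (g : V4 → ℝ) (hg : Differentiable ℝ g) (β γ : ℝ) (μ : Fin 4) (t : ℝ)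
    (a : Fin 3 → ℝ) :
    fderiv ℝ (fun a' => g (imm β γ μ t a')) a
      = (fderiv ℝ g (imm β γ μ t a)).comp (Lclm β γ μ) := by
  have himm : imm β γ μ t = fun a' => t • Γfr β γ μ + Lclm β γ μ a' := by
    funext a'
    simp [imm, Lclm_apply, Lfun]
  rw [himm]
  have hda : DifferentiableAt ℝ (fun a' : Fin 3 → ℝ => t • Γfr β γ μ + Lclm β γ μ a') a :=
    ((Lclm β γ μ).differentiable.const_add _).differentiableAt
  rw [show (fun a' => g (t • Γfr β γ μ + Lclm β γ μ a'))
      = g ∘ (fun a' => t • Γfr β γ μ + Lclm β γ μ a') from rfl,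
    fderiv_comp a (hg.differentiableAt) hda, fderiv_const_add, ContinuousLinearMap.fderiv]

/-- Lemma A: exterior derivative commutes with pullback. -/
lemma extD_pb2 (G : V4 → AlternatingMap ℝ V4 ℝ (Fin 2))
    (hG : ∀ v : Fin 2 → V4, ContDiff ℝ (⊤ : ℕ∞) fun x => G x v)
    (β γ : ℝ) (μ : Fin 4) (t : ℝ) (a : Fin 3 → ℝ) (v : Fin 3 → (Fin 3 → ℝ)) :
    extD (pb2 G β γ μ t) a v
      = extD (fun y w => G y w) (imm β γ μ t a) (fun i => Lfun β γ μ (v i)) := by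
  unfold extD pb2
  refine Finset.sum_congr rfl fun i _ => ?_
  congr 1
  have hg : Differentiable ℝ (fun y => G y (fun j => Lfun β γ μ (v (i.succAbove j)))) :=
    (hG _).differentiable (by simp)
  have h := fderiv_comp_imm (fun y => G y (fun j => Lfun β γ μ (v (i.succAbove j)))) hg β γ μ t a
  rw [h]
  simp [ContinuousLinearMap.comp_apply, Lclm_apply]

end Aux
section Aux2

lemma succAbove0 {α : Type*} (v : Fin 3 → α) :
    (fun j => v ((0 : Fin 3).succAbove j)) = ![v 1, v 2] := by
  funext j; fin_cases j <;> rfl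

lemma succAbove1 {α : Type*} (v : Fin 3 → α) :
    (fun j => v ((1 : Fin 3).succAbove j)) = ![v 0, v 2] := by
  funext j; fin_cases j <;> rfl

lemma succAbove2 {α : Type*} (v : Fin 3 → α) :
    (fun j => v ((2 : Fin 3).succAbove j)) = ![v 0, v 1] := by
  funext j; fin_cases j <;> rfl

/-- explicit formula for the exterior derivative of a 2-form -/
lemma extD_three (η : V4 → (Fin 2 → V4) → ℝ) (x : V4) (v : Fin 3 → V4) :
    extD η x v = fderiv ℝ (fun y => η y ![v 1, v 2]) x (v 0)
      - fderiv ℝ (fun y => η y ![v 0, v 2]) x (v 1)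
      + fderiv ℝ (fun y => η y ![v 0, v 1]) x (v 2) := by
  rw [extD, Fin.sum_univ_three, succAbove0, succAbove1, succAbove2]
  norm_num
  simp [ContinuousLinearMap.neg_apply, sub_eq_add_neg]

lemma upd2_0 (a b z : V4) : Function.update ![a, b] 0 z = ![z, b] := by
  funext j; fin_cases j <;> simp
lemma upd2_1 (a b z : V4) : Function.update ![a, b] 1 z = ![a, z] := by
  funext j; fin_cases j <;> simp

lemma map2_add0 (f : AlternatingMap ℝ V4 ℝ (Fin 2)) (a a' b : V4) :
    f ![a + a', b] = f ![a, b] + f ![a', b] := by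
  have h := f.map_update_add ![a, b] 0 a a'
  simpa only [upd2_0] using h
lemma map2_add1 (f : AlternatingMap ℝ V4 ℝ (Fin 2)) (a b b' : V4) :
    f ![a, b + b'] = f ![a, b] + f ![a, b'] := by
  have h := f.map_update_add ![a, b] 1 b b'
  simpa only [upd2_1] using h
lemma map2_smul0 (f : AlternatingMap ℝ V4 ℝ (Fin 2)) (r : ℝ) (a b : V4) :
    f ![r • a, b] = r * f ![a, b] := by
  have h := f.map_update_smul ![a, b] 0 r a
  simpa only [upd2_0, smul_eq_mul] using h
lemma map2_smul1 (f : AlternatingMap ℝ V4 ℝ (Fin 2)) (r : ℝ) (a b : V4) :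
    f ![a, r • b] = r * f ![a, b] := by
  have h := f.map_update_smul ![a, b] 1 r b
  simpa only [upd2_1, smul_eq_mul] using h
lemma map2_diag (f : AlternatingMap ℝ V4 ℝ (Fin 2)) (a : V4) : f ![a, a] = 0 :=
  f.map_eq_zero_of_eq _ (by rfl : (![a,a] : Fin 2 → V4) 0 = ![a,a] 1) (by decide)
lemma map2_swap (f : AlternatingMap ℝ V4 ℝ (Fin 2)) (a b : V4) :
    f ![b, a] = - f ![a, b] := by
  have h : (![a, b] ∘ Equiv.swap (0 : Fin 2) 1) = ![b, a] := by
    funext j; fin_cases j <;> simp [Equiv.swap_apply_left, Equiv.swap_apply_right]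
  rw [← h, f.map_swap _ (by decide)]

end Aux2
section Aux3

lemma fin3_cases (i : Fin 3) : i = 0 ∨ i = 1 ∨ i = 2 := by
  revert i; decide

lemma upd3_0 [DecidableEq (Fin 3)] (v : Fin 3 → V4) (z : V4) :
    Function.update v 0 z = ![z, v 1, v 2] := by
  funext j; rcases fin3_cases j with rfl | rfl | rfl
  · rw [Function.update_self]; rfl
  · rw [Function.update_of_ne (Fin.ne_of_val_ne (by decide))]; rfl
  · rw [Function.update_of_ne (Fin.ne_of_val_ne (by decide))]; rfl
lemma upd3_1 [DecidableEq (Fin 3)] (v : Fin 3 → V4) (z : V4) :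
    Function.update v 1 z = ![v 0, z, v 2] := by
  funext j; rcases fin3_cases j with rfl | rfl | rfl
  · rw [Function.update_of_ne (Fin.ne_of_val_ne (by decide))]; rfl
  · rw [Function.update_self]; rfl
  · rw [Function.update_of_ne (Fin.ne_of_val_ne (by decide))]; rfl
lemma upd3_2 [DecidableEq (Fin 3)] (v : Fin 3 → V4) (z : V4) :
    Function.update v 2 z = ![v 0, v 1, z] := by
  funext j; rcases fin3_cases j with rfl | rfl | rfl
  · rw [Function.update_of_ne (Fin.ne_of_val_ne (by decide))]; rfl
  · rw [Function.update_of_ne (Fin.ne_of_val_ne (by decide))]; rfl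
  · rw [Function.update_self]; rfl

lemma extD_three' (η : V4 → (Fin 2 → V4) → ℝ) (x : V4) (a b c : V4) :
    extD η x ![a, b, c] = fderiv ℝ (fun y => η y ![b, c]) x a
      - fderiv ℝ (fun y => η y ![a, c]) x b
      + fderiv ℝ (fun y => η y ![a, b]) x c := by
  rw [extD_three]
  rfl

lemma diffG (G : V4 → AlternatingMap ℝ V4 ℝ (Fin 2))
    (hG : ∀ v : Fin 2 → V4, ContDiff ℝ (⊤ : ℕ∞) fun x => G x v) (w : Fin 2 → V4) :
    Differentiable ℝ (fun y => G y w) :=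
  (hG w).differentiable (by simp)

lemma fdG_add0 (G : V4 → AlternatingMap ℝ V4 ℝ (Fin 2))
    (hG : ∀ v : Fin 2 → V4, ContDiff ℝ (⊤ : ℕ∞) fun x => G x v) (x a a' b c : V4) :
    fderiv ℝ (fun y => G y ![a + a', b]) x c
      = fderiv ℝ (fun y => G y ![a, b]) x c + fderiv ℝ (fun y => G y ![a', b]) x c := by
  have h : (fun y => G y ![a + a', b]) = fun y => G y ![a, b] + G y ![a', b] := by
    funext y; exact map2_add0 (G y) a a' b
  rw [h, fderiv_fun_add ((diffG G hG _).differentiableAt) ((diffG G hG _).differentiableAt)]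
  simp

lemma fdG_add1 (G : V4 → AlternatingMap ℝ V4 ℝ (Fin 2))
    (hG : ∀ v : Fin 2 → V4, ContDiff ℝ (⊤ : ℕ∞) fun x => G x v) (x a b b' c : V4) :
    fderiv ℝ (fun y => G y ![a, b + b']) x c
      = fderiv ℝ (fun y => G y ![a, b]) x c + fderiv ℝ (fun y => G y ![a, b']) x c := by
  have h : (fun y => G y ![a, b + b']) = fun y => G y ![a, b] + G y ![a, b'] := by
    funext y; exact map2_add1 (G y) a b b'
  rw [h, fderiv_fun_add ((diffG G hG _).differentiableAt) ((diffG G hG _).differentiableAt)]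
  simp

lemma fdG_smul0 (G : V4 → AlternatingMap ℝ V4 ℝ (Fin 2))
    (hG : ∀ v : Fin 2 → V4, ContDiff ℝ (⊤ : ℕ∞) fun x => G x v) (x : V4) (r : ℝ) (a b c : V4) :
    fderiv ℝ (fun y => G y ![r • a, b]) x c = r * fderiv ℝ (fun y => G y ![a, b]) x c := by
  have h : (fun y => G y ![r • a, b]) = fun y => r • G y ![a, b] := by
    funext y; rw [map2_smul0 (G y) r a b]; rfl
  rw [h, fderiv_fun_const_smul ((diffG G hG _).differentiableAt)]
  simp

lemma fdG_smul1 (G : V4 → AlternatingMap ℝ V4 ℝ (Fin 2))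
    (hG : ∀ v : Fin 2 → V4, ContDiff ℝ (⊤ : ℕ∞) fun x => G x v) (x : V4) (r : ℝ) (a b c : V4) :
    fderiv ℝ (fun y => G y ![a, r • b]) x c = r * fderiv ℝ (fun y => G y ![a, b]) x c := by
  have h : (fun y => G y ![a, r • b]) = fun y => r • G y ![a, b] := by
    funext y; rw [map2_smul1 (G y) r a b]; rfl
  rw [h, fderiv_fun_const_smul ((diffG G hG _).differentiableAt)]
  simp

lemma fdG_diag (G : V4 → AlternatingMap ℝ V4 ℝ (Fin 2)) (x a c : V4) :
    fderiv ℝ (fun y => G y ![a, a]) x c = 0 := by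
  have h : (fun y => G y ![a, a]) = fun _ => (0 : ℝ) := by
    funext y; exact map2_diag (G y) a
  rw [h, fderiv_fun_const]
  simp

lemma fdG_swap (G : V4 → AlternatingMap ℝ V4 ℝ (Fin 2)) (x a b c : V4) :
    fderiv ℝ (fun y => G y ![b, a]) x c = - fderiv ℝ (fun y => G y ![a, b]) x c := by
  have h : (fun y => G y ![b, a]) = fun y => -(G y ![a, b]) := by
    funext y; exact map2_swap (G y) a b
  rw [h, fderiv_fun_neg]
  simp

/-- the exterior derivative of the smooth 2-form `G` at `x`, as an alternating 3-form -/
def Dalt (G : V4 → AlternatingMap ℝ V4 ℝ (Fin 2))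
    (hG : ∀ v : Fin 2 → V4, ContDiff ℝ (⊤ : ℕ∞) fun x => G x v) (x : V4) :
    AlternatingMap ℝ V4 ℝ (Fin 3) where
  toFun v := extD (fun y w => G y w) x v
  map_update_add' v i a b := by
    rcases fin3_cases i with rfl | rfl | rfl
    · rw [upd3_0, upd3_0, upd3_0, extD_three', extD_three', extD_three', map_add,
        fdG_add0 G hG x a b (v 2) (v 1), fdG_add0 G hG x a b (v 1) (v 2)]
      ring
    · rw [upd3_1, upd3_1, upd3_1, extD_three', extD_three', extD_three',
        fdG_add0 G hG x a b (v 2) (v 0), map_add, fdG_add1 G hG x (v 0) a b (v 2)]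
      ring
    · rw [upd3_2, upd3_2, upd3_2, extD_three', extD_three', extD_three',
        fdG_add1 G hG x (v 1) a b (v 0), fdG_add1 G hG x (v 0) a b (v 1), map_add]
      ring
  map_update_smul' v i r a := by
    rcases fin3_cases i with rfl | rfl | rfl
    · rw [upd3_0, upd3_0, extD_three', extD_three', map_smul,
        fdG_smul0 G hG x r a (v 2) (v 1), fdG_smul0 G hG x r a (v 1) (v 2)]
      simp only [smul_eq_mul]; ring
    · rw [upd3_1, upd3_1, extD_three', extD_three',
        fdG_smul0 G hG x r a (v 2) (v 0), map_smul, fdG_smul1 G hG x r (v 0) a (v 2)]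
      simp only [smul_eq_mul]; ring
    · rw [upd3_2, upd3_2, extD_three', extD_three',
        fdG_smul1 G hG x r (v 1) a (v 0), fdG_smul1 G hG x r (v 0) a (v 1), map_smul]
      simp only [smul_eq_mul]; ring
  map_eq_zero_of_eq' v i j h hne := by
    rcases fin3_cases i with rfl | rfl | rfl <;> rcases fin3_cases j with rfl | rfl | rfl <;>
        first | (exact absurd rfl hne) | skip
    · -- i = 0, j = 1
      rw [extD_three, h, fdG_diag G]; ring
    · -- i = 0, j = 2
      rw [extD_three, h, fdG_diag G, fdG_swap G x (v 1) (v 2)]; ring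
    · -- i = 1, j = 0
      rw [extD_three, ← h, fdG_diag G]; ring
    · -- i = 1, j = 2
      rw [extD_three, h, fdG_diag G]; ring
    · -- i = 2, j = 0
      rw [extD_three, ← h, fdG_diag G, fdG_swap G x (v 1) (v 2)]; ring
    · -- i = 2, j = 1
      rw [extD_three, ← h, fdG_diag G]; ring

lemma Dalt_apply (G : V4 → AlternatingMap ℝ V4 ℝ (Fin 2))
    (hG : ∀ v : Fin 2 → V4, ContDiff ℝ (⊤ : ℕ∞) fun x => G x v) (x : V4) (v : Fin 3 → V4) :
    Dalt G hG x v = extD (fun y w => G y w) x v := rfl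

end Aux3
section Aux4

lemma one_sub_sq_pos {β : ℝ} (hβ0 : 0 < β) (hβ1 : β < 1) : (0:ℝ) < 1 - β ^ 2 := by nlinarith

lemma gamma_pos {β γ : ℝ} (hβ0 : 0 < β) (hβ1 : β < 1)
    (hγ : γ = (1 - β ^ 2) ^ (-(1 / 2) : ℝ)) : 0 < γ := by
  rw [hγ]; exact Real.rpow_pos_of_pos (one_sub_sq_pos hβ0 hβ1) _

lemma gamma_sq {β γ : ℝ} (hβ0 : 0 < β) (hβ1 : β < 1)
    (hγ : γ = (1 - β ^ 2) ^ (-(1 / 2) : ℝ)) : γ ^ 2 * (1 - β ^ 2) = 1 := by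
  have h1 := one_sub_sq_pos hβ0 hβ1
  rw [hγ, ← Real.rpow_natCast ((1 - β ^ 2) ^ (-(1 / 2) : ℝ)) 2, ← Real.rpow_mul h1.le]
  norm_num
  rw [Real.rpow_neg_one]
  field_simp

lemma fsucc0 : Fin.succ (0 : Fin 3) = (1 : Fin 4) := rfl
lemma fsucc1 : Fin.succ (1 : Fin 3) = (2 : Fin 4) := rfl
lemma fsucc2 : Fin.succ (2 : Fin 3) = (3 : Fin 4) := rfl

lemma fin4_cases (i : Fin 4) : i = 0 ∨ i = 1 ∨ i = 2 ∨ i = 3 := by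
  revert i; decide

lemma imm_surj (β γ : ℝ) (hβγ : γ ^ 2 * (1 - β ^ 2) = 1) (μ : Fin 4) (x : V4) :
    ∃ t a, imm β γ μ t a = x := by
  rcases fin4_cases μ with rfl | rfl | rfl | rfl
  · refine ⟨x 0, ![x 1, x 2, x 3], ?_⟩
    funext i
    rcases fin4_cases i with rfl | rfl | rfl | rfl <;>
      simp [imm, Γfr, Xfr, e, Fin.sum_univ_three, Pi.single_apply, fsucc0, fsucc1, fsucc2]
  · refine ⟨γ * x 0 - β * γ * x 1, ![-(β * γ) * x 0 + γ * x 1, x 2, x 3], ?_⟩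
    funext i
    rcases fin4_cases i with rfl | rfl | rfl | rfl <;>
      simp [imm, Γfr, Xfr, e, Fin.sum_univ_three, Pi.single_apply, fsucc0, fsucc1, fsucc2]
    · linear_combination (x 0) * hβγ
    · linear_combination (x 1) * hβγ
  · refine ⟨γ * x 0 - β * γ * x 2, ![x 1, -(β * γ) * x 0 + γ * x 2, x 3], ?_⟩
    funext i
    rcases fin4_cases i with rfl | rfl | rfl | rfl <;>
      simp [imm, Γfr, Xfr, e, Fin.sum_univ_three, Pi.single_apply, fsucc0, fsucc1, fsucc2]
    · linear_combination (x 0) * hβγ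
    · linear_combination (x 2) * hβγ
  · refine ⟨γ * x 0 - β * γ * x 3, ![x 1, x 2, -(β * γ) * x 0 + γ * x 3], ?_⟩
    funext i
    rcases fin4_cases i with rfl | rfl | rfl | rfl <;>
      simp [imm, Γfr, Xfr, e, Fin.sum_univ_three, Pi.single_apply, fsucc0, fsucc1, fsucc2]
    · linear_combination (x 0) * hβγ
    · linear_combination (x 3) * hβγ

end Aux4
section Aux5

lemma Xfr0 (β γ : ℝ) (k : Fin 3) : Xfr β γ 0 k = e k.succ := by
  simp [Xfr, Fin.succ_ne_zero]

lemma Lfun_single (β γ : ℝ) (μ : Fin 4) (k : Fin 3) :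
    Lfun β γ μ (Pi.single k 1) = Xfr β γ μ k := by
  rw [Lfun, Finset.sum_eq_single k]
  · simp
  · intro b _ hb
    rw [Pi.single_apply, if_neg hb, zero_smul]
  · intro hk
    exact absurd (Finset.mem_univ k) hk

lemma alt3_add0 (f : AlternatingMap ℝ V4 ℝ (Fin 3)) (a b c d : V4) :
    f ![a + b, c, d] = f ![a, c, d] + f ![b, c, d] := by
  have h := f.map_update_add ![a, c, d] 0 a b
  simpa [upd3_0] using h

lemma alt3_smul0 (f : AlternatingMap ℝ V4 ℝ (Fin 3)) (r : ℝ) (a c d : V4) :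
    f ![r • a, c, d] = r * f ![a, c, d] := by
  have h := f.map_update_smul ![a, c, d] 0 r a
  simpa [upd3_0] using h

lemma alt3_perm_zero (f : AlternatingMap ℝ V4 ℝ (Fin 3)) (u : Fin 3 → V4)
    (σ : Equiv.Perm (Fin 3)) (h : f u = 0) : f (u ∘ σ) = 0 := by
  rw [f.map_perm u σ, h, smul_zero]

set_option maxRecDepth 10000 in
lemma inj_factor : ∀ v : Fin 3 → Fin 4, Function.Injective v →
    ∃ σ : Equiv.Perm (Fin 3), ∃ w : Fin 3 → Fin 4, StrictMono w ∧ v = w ∘ σ := by decide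

set_option maxRecDepth 10000 in
lemma mono4 : ∀ w : Fin 3 → Fin 4, StrictMono w →
    w = ![0, 1, 2] ∨ w = ![0, 1, 3] ∨ w = ![0, 2, 3] ∨ w = ![1, 2, 3] := by decide

end Aux5
/-- the Gauss-law constraint d(D⁽μ⁾_t) = ρ⁽μ⁾_t on every simultaneity
leaf of each of the four boosted frames is equivalent to dG = J on ℝ⁴. -/
theorem covariantization_of_gauss_law
    (β γ : ℝ) (hβ0 : 0 < β) (hβ1 : β < 1)
    (hγ : γ = (1 - β ^ 2) ^ (-(1 / 2) : ℝ))
    (G : V4 → AlternatingMap ℝ V4 ℝ (Fin 2))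
    (J : V4 → AlternatingMap ℝ V4 ℝ (Fin 3))
    (hG : ∀ v : Fin 2 → V4, ContDiff ℝ (⊤ : ℕ∞) fun x => G x v)
    (hJ : ∀ v : Fin 3 → V4, ContDiff ℝ (⊤ : ℕ∞) fun x => J x v) :
    (∀ (μ : Fin 4) (t : ℝ) (a : Fin 3 → ℝ) (v : Fin 3 → (Fin 3 → ℝ)),
        extD (pb2 G β γ μ t) a v = pb3 J β γ μ t a v) ↔
      ∀ (x : V4) (v : Fin 3 → V4), extD (fun y w => G y w) x v = J x v := by
  have hβγ := gamma_sq hβ0 hβ1 hγ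
  have hγpos := gamma_pos hβ0 hβ1 hγ
  have hbγ : β * γ ≠ 0 := ne_of_gt (mul_pos hβ0 hγpos)
  constructor
  · intro h
    have key : ∀ (μ : Fin 4) (x : V4) (w : Fin 3 → Fin 3),
        extD (fun y v => G y v) x (fun i => Xfr β γ μ (w i))
          = J x (fun i => Xfr β γ μ (w i)) := by
      intro μ x w
      obtain ⟨t, a, rfl⟩ := imm_surj β γ hβγ μ x
      have h2 := h μ t a (fun i => Pi.single (w i) 1)
      rw [extD_pb2 G hG] at h2
      simpa only [pb3, Lfun_single] using h2
    intro x v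
    have hDJ : Dalt G hG x = J x := by
      apply Module.Basis.ext_alternating (Pi.basisFun ℝ (Fin 4))
      intro w hw
      have hbasis : ∀ (u : Fin 3 → Fin 4),
          (fun i => (Pi.basisFun ℝ (Fin 4)) (u i)) = fun i => e (u i) := by
        intro u; funext i; simp [e]
      rw [hbasis]
      set ω := Dalt G hG x - J x with hωdef
      suffices hzero : ω (fun i => e (w i)) = 0 by
        have := hzero
        rw [hωdef, AlternatingMap.sub_apply, sub_eq_zero] at this
        exact this
      have key' : ∀ (μ : Fin 4) (k : Fin 3 → Fin 3),
          ω (fun i => Xfr β γ μ (k i)) = 0 := by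
        intro μ k
        rw [hωdef, AlternatingMap.sub_apply, Dalt_apply, key, sub_self]
      have hsp' : ∀ k0 k1 k2 : Fin 3, ω ![e k0.succ, e k1.succ, e k2.succ] = 0 := by
        intro k0 k1 k2
        have h0 := key' 0 ![k0, k1, k2]
        have heq : (fun i => Xfr β γ 0 ((![k0, k1, k2] : Fin 3 → Fin 3) i))
            = ![e k0.succ, e k1.succ, e k2.succ] := by
          funext i
          rcases fin3_cases i with rfl | rfl | rfl <;> simp [Xfr0]
        rwa [heq] at h0
      have h123 : ω ![e 1, e 2, e 3] = 0 := by
        simpa only [fsucc0, fsucc1, fsucc2] using hsp' 0 1 2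
      have h213 : ω ![e 2, e 1, e 3] = 0 := by
        simpa only [fsucc0, fsucc1, fsucc2] using hsp' 1 0 2
      have h312 : ω ![e 3, e 1, e 2] = 0 := by
        simpa only [fsucc0, fsucc1, fsucc2] using hsp' 2 0 1
      -- boosted identities
      have hb1 : ω ![e 0, e 2, e 3] = 0 := by
        have hb := key' 1 ![0, 1, 2]
        have heq : (fun i => Xfr β γ 1 ((![0, 1, 2] : Fin 3 → Fin 3) i))
            = ![(β * γ) • e 0 + γ • e 1, e 2, e 3] := by
          funext i
          rcases fin3_cases i with rfl | rfl | rfl <;>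
            simp [Xfr, fsucc0, fsucc1, fsucc2]
        rw [heq, alt3_add0, alt3_smul0, alt3_smul0, h123] at hb
        have : (β * γ) * ω ![e 0, e 2, e 3] = 0 := by linarith
        exact (mul_eq_zero.mp this).resolve_left hbγ
      have hb2 : ω ![e 0, e 1, e 3] = 0 := by
        have hb := key' 2 ![1, 0, 2]
        have heq : (fun i => Xfr β γ 2 ((![1, 0, 2] : Fin 3 → Fin 3) i))
            = ![(β * γ) • e 0 + γ • e 2, e 1, e 3] := by
          funext i
          rcases fin3_cases i with rfl | rfl | rfl <;>
            simp [Xfr, fsucc0, fsucc1, fsucc2]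
        rw [heq, alt3_add0, alt3_smul0, alt3_smul0, h213] at hb
        have : (β * γ) * ω ![e 0, e 1, e 3] = 0 := by linarith
        exact (mul_eq_zero.mp this).resolve_left hbγ
      have hb3 : ω ![e 0, e 1, e 2] = 0 := by
        have hb := key' 3 ![2, 0, 1]
        have heq : (fun i => Xfr β γ 3 ((![2, 0, 1] : Fin 3 → Fin 3) i))
            = ![(β * γ) • e 0 + γ • e 3, e 1, e 2] := by
          funext i
          rcases fin3_cases i with rfl | rfl | rfl <;>
            simp [Xfr, fsucc0, fsucc1, fsucc2]
        rw [heq, alt3_add0, alt3_smul0, alt3_smul0, h312] at hb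
        have : (β * γ) * ω ![e 0, e 1, e 2] = 0 := by linarith
        exact (mul_eq_zero.mp this).resolve_left hbγ
      obtain ⟨σ, w', hw', rfl⟩ := inj_factor w hw
      have hcomp : (fun i => e ((w' ∘ σ) i)) = (fun i => e (w' i)) ∘ σ := rfl
      rw [hcomp]
      apply alt3_perm_zero
      rcases mono4 w' hw' with rfl | rfl | rfl | rfl
      · have heq : (fun i => e ((![0, 1, 2] : Fin 3 → Fin 4) i)) = ![e 0, e 1, e 2] := by
          funext i; rcases fin3_cases i with rfl | rfl | rfl <;> rfl
        rw [heq]; exact hb3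
      · have heq : (fun i => e ((![0, 1, 3] : Fin 3 → Fin 4) i)) = ![e 0, e 1, e 3] := by
          funext i; rcases fin3_cases i with rfl | rfl | rfl <;> rfl
        rw [heq]; exact hb2
      · have heq : (fun i => e ((![0, 2, 3] : Fin 3 → Fin 4) i)) = ![e 0, e 2, e 3] := by
          funext i; rcases fin3_cases i with rfl | rfl | rfl <;> rfl
        rw [heq]; exact hb1
      · have heq : (fun i => e ((![1, 2, 3] : Fin 3 → Fin 4) i)) = ![e 1, e 2, e 3] := by
          funext i; rcases fin3_cases i with rfl | rfl | rfl <;> rfl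
        rw [heq]; exact h123
    rw [show extD (fun y w => G y w) x v = Dalt G hG x v from rfl, hDJ]
  · intro h μ t a v
    rw [extD_pb2 G hG]
    exact h _ _
end
end

section
/- For every alternating 3-linear form J on ℝ⁴, the temporal components of J in the fiducial frame are recovered from the transversal components in the four frames by the formulas: J(e₀, e₂, e₃) = (1/β)[(1/γ) J(X⁽¹⁾₁, X⁽¹⁾₂, X⁽¹⁾₃) − J(e₁, e₂, e₃)], J(e₀, e₁, e₃) = (1/β)[−(1/γ) J(X⁽²⁾₁, X⁽²⁾₂, X⁽²⁾₃) + J(e₁, e₂, e₃)], and J(e₀, e₁, e₂) = (1/β)[(1/γ) J(X⁽³⁾₁, X⁽³⁾₂, X⁽³⁾₃) − J(e₁, e₂, e₃)]. -/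
noncomputable section

lemma upd0 (u a b x : V4) : Function.update ![u, a, b] 0 x = ![x, a, b] := by
  funext i; fin_cases i <;> simp
lemma upd1 (u a b x : V4) : Function.update ![a, u, b] 1 x = ![a, x, b] := by
  funext i; fin_cases i <;> simp
lemma upd2 (u a b x : V4) : Function.update ![a, b, u] 2 x = ![a, b, x] := by
  funext i; fin_cases i <;> simp

lemma J0 (J : AlternatingMap ℝ V4 ℝ (Fin 3)) (c d : ℝ) (u v a b : V4) :
    J ![c • u + d • v, a, b] = c * J ![u, a, b] + d * J ![v, a, b] := by
  rw [← upd0 u a b (c • u + d • v), J.map_update_add, J.map_update_smul, J.map_update_smul,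
    upd0 u a b u, upd0 u a b v, smul_eq_mul, smul_eq_mul]
lemma J1 (J : AlternatingMap ℝ V4 ℝ (Fin 3)) (c d : ℝ) (u v a b : V4) :
    J ![a, c • u + d • v, b] = c * J ![a, u, b] + d * J ![a, v, b] := by
  rw [← upd1 u a b (c • u + d • v), J.map_update_add, J.map_update_smul, J.map_update_smul,
    upd1 u a b u, upd1 u a b v, smul_eq_mul, smul_eq_mul]
lemma J2 (J : AlternatingMap ℝ V4 ℝ (Fin 3)) (c d : ℝ) (u v a b : V4) :
    J ![a, b, c • u + d • v] = c * J ![a, b, u] + d * J ![a, b, v] := by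
  rw [← upd2 u a b (c • u + d • v), J.map_update_add, J.map_update_smul, J.map_update_smul,
    upd2 u a b u, upd2 u a b v, smul_eq_mul, smul_eq_mul]

lemma Jswap01 (J : AlternatingMap ℝ V4 ℝ (Fin 3)) (a b c : V4) :
    J ![b, a, c] = -J ![a, b, c] := by
  have h := J.map_swap ![a, b, c] (show (0 : Fin 3) ≠ 1 by decide)
  rw [show ![a, b, c] ∘ Equiv.swap (0 : Fin 3) 1 = ![b, a, c] by
    funext i; fin_cases i <;> simp [Equiv.swap_apply_of_ne_of_ne]] at h
  exact h
lemma Jswap12 (J : AlternatingMap ℝ V4 ℝ (Fin 3)) (a b c : V4) :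
    J ![a, c, b] = -J ![a, b, c] := by
  have h := J.map_swap ![a, b, c] (show (1 : Fin 3) ≠ 2 by decide)
  rw [show ![a, b, c] ∘ Equiv.swap (1 : Fin 3) 2 = ![a, c, b] by
    funext i; fin_cases i <;> simp [Equiv.swap_apply_of_ne_of_ne]] at h
  exact h

/-- reconstruction of the temporal components of a 3-form in the fiducial
frame from its transversal components in the four frames. -/
theorem temporal_components_from_transversal
    (β γ : ℝ) (hβ0 : 0 < β) (hβ1 : β < 1)
    (hγ : γ = (1 - β ^ 2) ^ (-(1 / 2) : ℝ))
    (J : AlternatingMap ℝ V4 ℝ (Fin 3)) :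
    J ![e 0, e 2, e 3] =
        (1 / β) * ((1 / γ) * J (fun k => Xfr β γ 1 k) - J ![e 1, e 2, e 3]) ∧
      J ![e 0, e 1, e 3] =
        (1 / β) * (-(1 / γ) * J (fun k => Xfr β γ 2 k) + J ![e 1, e 2, e 3]) ∧
      J ![e 0, e 1, e 2] =
        (1 / β) * ((1 / γ) * J (fun k => Xfr β γ 3 k) - J ![e 1, e 2, e 3]) := by
  have hb2 : (0:ℝ) < 1 - β ^ 2 := by nlinarith
  have hγ0 : 0 < γ := by rw [hγ]; exact Real.rpow_pos_of_pos hb2 _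
  have hγn : γ ≠ 0 := ne_of_gt hγ0
  have hβn : β ≠ 0 := ne_of_gt hβ0
  have hX1 : (fun k => Xfr β γ 1 k) = ![(β * γ) • e 0 + γ • e 1, e 2, e 3] := by
    funext k
    fin_cases k <;> simp only [Xfr] <;>
      first
      | (rw [if_pos (by decide)]; rfl)
      | (rw [if_neg (by decide)]; rfl)
  have hX2 : (fun k => Xfr β γ 2 k) = ![e 1, (β * γ) • e 0 + γ • e 2, e 3] := by
    funext k
    fin_cases k <;> simp only [Xfr] <;>
      first
      | (rw [if_pos (by decide)]; rfl)
      | (rw [if_neg (by decide)]; rfl)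
  have hX3 : (fun k => Xfr β γ 3 k) = ![e 1, e 2, (β * γ) • e 0 + γ • e 3] := by
    funext k
    fin_cases k <;> simp only [Xfr] <;>
      first
      | (rw [if_pos (by decide)]; rfl)
      | (rw [if_neg (by decide)]; rfl)
  rw [hX1, hX2, hX3, J0 J (β * γ) γ (e 0) (e 1) (e 2) (e 3),
    J1 J (β * γ) γ (e 0) (e 2) (e 1) (e 3), J2 J (β * γ) γ (e 0) (e 3) (e 1) (e 2)]
  rw [Jswap01 J (e 0) (e 1) (e 3), Jswap12 J (e 1) (e 0) (e 2), Jswap01 J (e 0) (e 1) (e 2)]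
  refine ⟨?_, ?_, ?_⟩ <;> field_simp <;> ring
end
end
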